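/- (Weak duality for B-SVM.) If α, θ ∈ ℝ^n satisfy 0 ≤ α_i ≤ C1 and 0 ≤ θ_i ≤ C2 for all i and Σ_{i=1}^n (α_i − θ_i) y_i = 0, then for every (β, β0) ∈ ℝ^m × ℝ, L_D(α, θ) = ρ1 Σ_i α_i − ρ2 Σ_i θ_i − (1/2)(α − θ)ᵀ B (α − θ) ≤ f_BSVM(β, β0), where B_ij = y_i y_j ⟨x_i, x_j⟩. -/
import Mathlib


open Matrix RealInnerProductSpace

/-- **Weak duality for B-SVM.**
If `α, θ ∈ ℝⁿ` satisfy `0 ≤ αᵢ ≤ C1`, `0 ≤ θᵢ ≤ C2` for all `i` and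
`∑ (αᵢ - θᵢ) yᵢ = 0`, then for every `(β, β0)`,
`L_D(α, θ) = ρ1 ∑ αᵢ - ρ2 ∑ θᵢ - (1/2)(α - θ)ᵀ B (α - θ) ≤ f_BSVM(β, β0)`,
where `B i j = yᵢ yⱼ ⟨xᵢ, xⱼ⟩` and
`f_BSVM(β, β0) = (1/2)‖β‖² + C1 ∑ [ρ1 - yᵢ(βᵀxᵢ + β0)]₊
  + C2 ∑ [yᵢ(βᵀxᵢ + β0) - ρ2]₊`. -/
theorem bsvm_weak_duality (n m : ℕ)
    (x : Fin n → EuclideanSpace ℝ (Fin m))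
    (y : Fin n → ℝ) (hy : ∀ i, y i = 1 ∨ y i = -1)
    (ρ1 ρ2 C1 C2 : ℝ) (hC1 : 0 ≤ C1) (hC2 : 0 ≤ C2)
    (B : Matrix (Fin n) (Fin n) ℝ)
    (hB : ∀ i j, B i j = y i * y j * ⟪x i, x j⟫)
    (α θ : Fin n → ℝ)
    (hα : ∀ i, 0 ≤ α i ∧ α i ≤ C1) (hθ : ∀ i, 0 ≤ θ i ∧ θ i ≤ C2)
    (hsum : ∑ i, (α i - θ i) * y i = 0)
    (β : EuclideanSpace ℝ (Fin m)) (β0 : ℝ) :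
    ρ1 * ∑ i, α i - ρ2 * ∑ i, θ i
        - (1 / 2) * ((α - θ) ⬝ᵥ B.mulVec (α - θ))
      ≤ (1 / 2) * ‖β‖ ^ 2
          + C1 * ∑ i, max (ρ1 - y i * (⟪β, x i⟫ + β0)) 0
          + C2 * ∑ i, max (y i * (⟪β, x i⟫ + β0) - ρ2) 0 := by
  set c : Fin n → ℝ := fun i => (α i - θ i) * y i with hc
  set w : EuclideanSpace ℝ (Fin m) := ∑ i, c i • x i with hwdef
  have hcsum : ∑ i, c i = 0 := hsum
  -- quadratic form equals ‖w‖²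
  have hBw : (α - θ) ⬝ᵥ B.mulVec (α - θ) = ‖w‖ ^ 2 := by
    rw [← real_inner_self_eq_norm_sq, hwdef]
    rw [sum_inner]
    simp only [dotProduct, Matrix.mulVec, dotProduct, Pi.sub_apply, hB]
    refine Finset.sum_congr rfl fun i _ => ?_
    rw [inner_sum, Finset.mul_sum]
    refine Finset.sum_congr rfl fun j _ => ?_
    rw [real_inner_smul_left, real_inner_smul_right, hc]
    ring
  -- inner product of β with w
  have hβw : ⟪β, w⟫ = ∑ i, c i * ⟪β, x i⟫ := by
    rw [hwdef, inner_sum]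
    exact Finset.sum_congr rfl fun i _ => real_inner_smul_right _ _ _
  -- the linear part bound
  have key : ρ1 * ∑ i, α i - ρ2 * ∑ i, θ i - ⟪β, w⟫
      ≤ C1 * ∑ i, max (ρ1 - y i * (⟪β, x i⟫ + β0)) 0
        + C2 * ∑ i, max (y i * (⟪β, x i⟫ + β0) - ρ2) 0 := by
    have hβ0 : ∑ i, c i * β0 = 0 := by
      rw [← Finset.sum_mul, hcsum, zero_mul]
    have hrw : ρ1 * ∑ i, α i - ρ2 * ∑ i, θ i - ⟪β, w⟫
        = ∑ i, (α i * (ρ1 - y i * (⟪β, x i⟫ + β0))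
            + θ i * (y i * (⟪β, x i⟫ + β0) - ρ2)) := by
      rw [hβw, ← sub_zero (ρ1 * ∑ i, α i - ρ2 * ∑ i, θ i - _), ← hβ0,
        Finset.mul_sum, Finset.mul_sum]
      rw [← Finset.sum_sub_distrib, ← Finset.sum_sub_distrib, ← Finset.sum_sub_distrib]
      refine Finset.sum_congr rfl fun i _ => ?_
      rw [hc]; ring
    rw [hrw, Finset.mul_sum, Finset.mul_sum, ← Finset.sum_add_distrib]
    refine Finset.sum_le_sum fun i _ => ?_
    have h1 : α i * (ρ1 - y i * (⟪β, x i⟫ + β0))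
        ≤ C1 * max (ρ1 - y i * (⟪β, x i⟫ + β0)) 0 := by
      calc α i * (ρ1 - y i * (⟪β, x i⟫ + β0))
          ≤ α i * max (ρ1 - y i * (⟪β, x i⟫ + β0)) 0 :=
            mul_le_mul_of_nonneg_left (le_max_left _ _) (hα i).1
        _ ≤ C1 * max (ρ1 - y i * (⟪β, x i⟫ + β0)) 0 :=
            mul_le_mul_of_nonneg_right (hα i).2 (le_max_right _ _)
    have h2 : θ i * (y i * (⟪β, x i⟫ + β0) - ρ2)
        ≤ C2 * max (y i * (⟪β, x i⟫ + β0) - ρ2) 0 := by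
      calc θ i * (y i * (⟪β, x i⟫ + β0) - ρ2)
          ≤ θ i * max (y i * (⟪β, x i⟫ + β0) - ρ2) 0 :=
            mul_le_mul_of_nonneg_left (le_max_left _ _) (hθ i).1
        _ ≤ C2 * max (y i * (⟪β, x i⟫ + β0) - ρ2) 0 :=
            mul_le_mul_of_nonneg_right (hθ i).2 (le_max_right _ _)
    linarith
  -- ½‖β‖² - ⟪β,w⟫ + ½‖w‖² ≥ 0
  have hsq : (0:ℝ) ≤ ‖β - w‖ ^ 2 := sq_nonneg _
  have hexp : ‖β - w‖ ^ 2 = ‖β‖ ^ 2 - 2 * ⟪β, w⟫ + ‖w‖ ^ 2 := by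
    rw [norm_sub_sq_real]
  rw [hBw]
  linarith
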